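/- arXiv:1008.0061 — 2 statements merged into one kernel-verified Lean document; each statement's English description precedes it below -/
import Mathlib

section
/- Null vector component estimate: let v be the unit null vector of H'(ẑₑ), and suppose ‖H'(ẑ) − H'(ẑₑ)‖ ≤ Cε, ‖∂H(ẑ)/∂z₁‖ ≤ C₁ε, and the matrix of columns [∂H(ẑ)/∂z₂,…,∂H(ẑ)/∂zₙ] has smallest singular value ≥ c > 0. Then |vᵢ| ≤ ((C + C₁)/c)·ε for 2 ≤ i ≤ n, and hence for ε small enough, |v₁| ≥ 1/2 (v₁ is bounded away from 0). -/
open Matrix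

/-!
Write `v = w + v₀ e₀` with `w₀ = 0`. Since `B v = 0`, `‖A v‖ = ‖(A - B) v‖ ≤ Cε`, and
`A e₀` is the first column of `A`, so `c ‖w‖ ≤ ‖A w‖ ≤ ‖A v‖ + |v₀| ‖A e₀‖ ≤ (C + C₁) ε`.
The components `vᵢ = wᵢ` (`i ≠ 0`) are bounded by `‖w‖`, and `|v₀|² = 1 - ∑_{i ≠ 0} |vᵢ|²`.
-/

theorem sqrt_sum_norm_sq_eq_norm_toLp {ι : Type*} {β : ι → Type*} [Fintype ι]
    [∀ i, SeminormedAddCommGroup (β i)] (f : ∀ i, β i) :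
    √(∑ i, ‖f i‖ ^ 2) = ‖WithLp.toLp 2 f‖ :=
  (PiLp.norm_eq_of_L2 _).symm

theorem mul_norm_sub_smul_le_norm_map_add_norm_map {𝕜 E F : Type*} [NormedField 𝕜]
    [SeminormedAddCommGroup E] [Module 𝕜 E] [SeminormedAddCommGroup F] [NormedSpace 𝕜 F]
    (T : E →ₗ[𝕜] F) {v e : E} {t : 𝕜} {c : ℝ} (ht : ‖t‖ ≤ 1)
    (hlow : c * ‖v - t • e‖ ≤ ‖T (v - t • e)‖) :
    c * ‖v - t • e‖ ≤ ‖T v‖ + ‖T e‖ :=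
  calc c * ‖v - t • e‖ ≤ ‖T v - t • T e‖ := by rwa [map_sub, map_smul] at hlow
    _ ≤ ‖T v‖ + ‖t‖ * ‖T e‖ := (norm_sub_le _ _).trans_eq (by rw [norm_smul])
    _ ≤ ‖T v‖ + ‖T e‖ := by gcongr; exact mul_le_of_le_one_left (norm_nonneg _) ht

theorem half_le_norm_apply_of_sum_norm_sq_eq_one {ι β : Type*} [Fintype ι]
    [SeminormedAddCommGroup β] {f : ι → β} {i₀ : ι} {K : ℝ} (hf : ∑ i, ‖f i‖ ^ 2 = 1)
    (hK : ∀ i, i ≠ i₀ → ‖f i‖ ≤ K) (hsmall : Fintype.card ι * K ^ 2 ≤ 3 / 4) :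
    1 / 2 ≤ ‖f i₀‖ := by
  classical
  have hrest : ∑ i ∈ Finset.univ.erase i₀, ‖f i‖ ^ 2 ≤ Fintype.card ι * K ^ 2 :=
    calc ∑ i ∈ Finset.univ.erase i₀, ‖f i‖ ^ 2 ≤ ∑ i, K ^ 2 :=
          (Finset.sum_le_sum fun i hi =>
            pow_le_pow_left₀ (norm_nonneg _) (hK i (Finset.ne_of_mem_erase hi)) 2).trans
          (Finset.sum_le_sum_of_subset_of_nonneg (Finset.erase_subset _ _)
            fun _ _ _ => sq_nonneg K)
      _ = Fintype.card ι * K ^ 2 := by simp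
  rw [← Finset.add_sum_erase _ _ (Finset.mem_univ i₀)] at hf
  nlinarith [norm_nonneg (f i₀)]

theorem null_vector_component_estimate_general {n : ℕ}
    (A B : Matrix (Fin (n + 1)) (Fin (n + 1)) ℂ)  -- A = H'(ẑ), B = H'(ẑₑ)
    (v : Fin (n + 1) → ℂ) (ε C C₁ c : ℝ)
    (hc : 0 < c)
    (hv : ∑ i, ‖v i‖ ^ 2 = 1) (hnull : B *ᵥ v = 0)
    (hAB : ∀ x : Fin (n + 1) → ℂ,
        Real.sqrt (∑ i, ‖((A - B) *ᵥ x) i‖ ^ 2) ≤ C * ε * Real.sqrt (∑ i, ‖x i‖ ^ 2))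
    (hcol1 : Real.sqrt (∑ i, ‖A i 0‖ ^ 2) ≤ C₁ * ε)
    (hsub : ∀ w : Fin (n + 1) → ℂ, w 0 = 0 →
        c * Real.sqrt (∑ i, ‖w i‖ ^ 2) ≤ Real.sqrt (∑ i, ‖(A *ᵥ w) i‖ ^ 2)) :
    (∀ i, i ≠ 0 → ‖v i‖ ≤ ((C + C₁) / c) * ε) ∧
      ((n + 1 : ℝ) * (((C + C₁) / c) * ε) ^ 2 ≤ 3 / 4 → (1 / 2 : ℝ) ≤ ‖v 0‖) := by
  have hv_norm : ‖WithLp.toLp 2 v‖ = 1 := by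
    rw [← sqrt_sum_norm_sq_eq_norm_toLp, hv, Real.sqrt_one]
  simp only [sqrt_sum_norm_sq_eq_norm_toLp] at hAB hcol1 hsub
  set T := toLpLin 2 2 A
  set e : EuclideanSpace ℂ (Fin (n + 1)) := WithLp.toLp 2 (Pi.single 0 1)
  set w := WithLp.toLp 2 v - v 0 • e
  have hAv : ‖T (WithLp.toLp 2 v)‖ ≤ C * ε := by
    simpa [T, sub_mulVec, hnull, hv_norm] using hAB v
  have hAe : ‖T e‖ ≤ C₁ * ε := by
    rwa [toLpLin_apply, WithLp.ofLp_toLp, mulVec_single_one]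
  have hw : ‖w‖ ≤ (C + C₁) / c * ε := by
    have hv0 : ‖v 0‖ ≤ 1 := hv_norm ▸ PiLp.norm_apply_le (WithLp.toLp 2 v) 0
    have hlow : c * ‖w‖ ≤ ‖T w‖ := hsub (WithLp.ofLp w) (by simp [w, e])
    have hcw := mul_norm_sub_smul_le_norm_map_add_norm_map T hv0 hlow
    rw [div_mul_eq_mul_div, le_div_iff₀ hc]
    linarith [hcw.trans (add_le_add hAv hAe)]
  have hcomp : ∀ i, i ≠ 0 → ‖v i‖ ≤ (C + C₁) / c * ε := fun i hi => by
    simpa [w, e, hi] using (PiLp.norm_apply_le w i).trans hw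
  refine ⟨hcomp, fun hsmall => half_le_norm_apply_of_sum_norm_sq_eq_one hv hcomp ?_⟩
  simpa using hsmall

/-- Null vector component estimate: let `v` be the unit null vector of `H'(ẑₑ)`, and suppose
`‖H'(ẑ) − H'(ẑₑ)‖ ≤ Cε`, `‖∂H(ẑ)/∂z₁‖ ≤ C₁ε`, and the matrix of columns
`[∂H(ẑ)/∂z₂,…,∂H(ẑ)/∂zₙ]` has smallest singular value `≥ c > 0`. Then
`|vᵢ| ≤ ((C + C₁)/c)·ε` for `2 ≤ i ≤ n`, and hence for `ε` small enough `|v₁| ≥ 1/2`. -/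
theorem null_vector_component_estimate {n : ℕ}
    (A B : Matrix (Fin (n + 1)) (Fin (n + 1)) ℂ)  -- A = H'(ẑ), B = H'(ẑₑ)
    (v : Fin (n + 1) → ℂ) (ε C C₁ c : ℝ)
    (hε : 0 < ε) (hC : 0 < C) (hC₁ : 0 < C₁) (hc : 0 < c)
    (hv : ∑ i, ‖v i‖ ^ 2 = 1) (hnull : B *ᵥ v = 0)
    (hAB : ∀ x : Fin (n + 1) → ℂ,
        Real.sqrt (∑ i, ‖((A - B) *ᵥ x) i‖ ^ 2) ≤ C * ε * Real.sqrt (∑ i, ‖x i‖ ^ 2))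
    (hcol1 : Real.sqrt (∑ i, ‖A i 0‖ ^ 2) ≤ C₁ * ε)
    (hsub : ∀ w : Fin (n + 1) → ℂ, w 0 = 0 →
        c * Real.sqrt (∑ i, ‖w i‖ ^ 2) ≤ Real.sqrt (∑ i, ‖(A *ᵥ w) i‖ ^ 2)) :
    (∀ i, i ≠ 0 → ‖v i‖ ≤ ((C + C₁) / c) * ε) ∧
      ((n + 1 : ℝ) * (((C + C₁) / c) * ε) ^ 2 ≤ 3 / 4 → (1 / 2 : ℝ) ≤ ‖v 0‖) :=
  null_vector_component_estimate_general A B v ε C C₁ c hc hv hnull hAB hcol1 hsub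
end

section
/- Uniqueness of closed extension in breadth one: if two closed bases {L̃₀,…,L̃_k} and {Γ₀,…,Γ_k} of the same Max Noether space satisfy Γ₀ = L̃₀ = D(0) and Γ₁ = (1/a)L̃₁ for some a ≠ 0, each L̃ᵢ and Γᵢ contains the pure derivative D(i,0,…,0) (with coefficient 1 resp. 1/aⁱ) and no lower pure derivatives D(j,0,…,0) for 0 < j < i, and Φ₁ acts by Φ₁(Γᵢ reduced) = (1/aⁱ) L̃_{i−1}, then each Γᵢ is a linear combination of L̃₀,…,L̃ᵢ, with the reduced form Γ̄ᵢ = (1/aⁱ) L̃ᵢ. -/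
/-!
Write `W_m` for the span of `L₀, …, L_{m-1}`. Since `Φ₁` sends `L_{j+1}` to `L_j` and kills
`L₀ = D(0)`, it maps `W_{m+1}` into `W_m`; and if `x = c L_{m+1} + y ∈ W_{m+2}` has `Φ₁ x ∈ W_m`,
then `c L_m = Φ₁ x - Φ₁ y ∈ W_m`, so `c = 0` by independence of the `Lⱼ`. Descending from
`W_{K+1}`, closedness of the `Γ` family gives by induction `Γᵢ ∈ W_{i+1}`, i.e.
`Γᵢ = c Lᵢ + (a combination of L₀, …, L_{i-1})`. The coefficient `c` is read off at the pure
derivative `D(i, 0, …, 0)`, where `Lᵢ` has coefficient `1` and every `Lⱼ` with `j < i` vanishes.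
-/

open MvPolynomial

/-- The anti-differentiation map `Φⱼ` on coefficient vectors of differential operators:
`(Φⱼ c)(β) = c(β + eⱼ)`. -/
noncomputable def shiftOp {σ : Type*} [DecidableEq σ] (j : σ)
    (c : (σ →₀ ℕ) →₀ ℂ) : (σ →₀ ℕ) →₀ ℂ :=
  Finsupp.comapDomain (fun β => β + Finsupp.single j 1) c
    ((add_left_injective _).injOn)

open Set Submodule

section Flag

variable {R M : Type*} [Ring R] [AddCommGroup M] [Module R M]
  {f : M →ₗ[R] M} {L : ℕ → M} {K : ℕ}

theorem range_fin_eq_image_Iio {α : Type*} (v : ℕ → α) (m : ℕ) :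
    range (fun i : Fin m => v i) = v '' Iio m := by
  rw [← Fin.range_val, ← range_comp]
  rfl

theorem span_image_Iio_add_one (L : ℕ → M) (m : ℕ) :
    span R (L '' Iio (m + 1)) = span R (insert (L m) (L '' Iio m)) := by
  rw [Iio_add_one_eq_Iic, ← Iio_insert, image_insert_eq]

theorem map_span_image_Iio_add_one_le (hf0 : f (L 0) = 0) (hf : ∀ i < K, f (L (i + 1)) = L i)
    {m : ℕ} (hm : m ≤ K) : (span R (L '' Iio (m + 1))).map f ≤ span R (L '' Iio m) := by
  rw [map_span_le]
  rintro _ ⟨_ | j, hj, rfl⟩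
  · rw [hf0]
    exact zero_mem _
  · rw [hf j (by simp at hj; omega)]
    exact subset_span ⟨j, by simp at hj ⊢; omega, rfl⟩

theorem mem_span_image_Iio_of_map_mem (hL : LinearIndepOn R L (Iio (K + 1)))
    (hf0 : f (L 0) = 0) (hf : ∀ i < K, f (L (i + 1)) = L i) {m : ℕ} (hm : m < K) {x : M}
    (hx : x ∈ span R (L '' Iio (m + 2))) (hfx : f x ∈ span R (L '' Iio m)) :
    x ∈ span R (L '' Iio (m + 1)) := by
  rw [span_image_Iio_add_one] at hx
  obtain ⟨c, y, hy, rfl⟩ := mem_span_insert.mp hx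
  have hfy : f y ∈ span R (L '' Iio m) :=
    map_span_image_Iio_add_one_le hf0 hf hm.le (mem_map_of_mem hy)
  have hcL : c • L m ∈ span R (L '' Iio m) := by
    have := sub_mem hfx hfy
    rwa [map_add, map_smul, hf m hm, add_sub_cancel_right] at this
  have hc : c = 0 := hL.eq_zero_of_smul_mem_span (by simp; omega) c <|
    span_mono (image_mono fun j hj => by simp at hj ⊢; omega) hcL
  simpa [hc] using hy

theorem mem_span_image_Iio_of_map_mem_of_lt (hL : LinearIndepOn R L (Iio (K + 1)))
    (hf0 : f (L 0) = 0) (hf : ∀ i < K, f (L (i + 1)) = L i) {i : ℕ} (hi : i < K) {x : M}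
    (hx : x ∈ span R (L '' Iio (K + 1))) (hfx : f x ∈ span R (L '' Iio (i + 1))) :
    x ∈ span R (L '' Iio (i + 2)) :=
  Nat.decreasingInduction' (P := fun k => x ∈ span R (L '' Iio (k + 1)))
    (fun _ hk hik hxk => mem_span_image_Iio_of_map_mem hL hf0 hf hk hxk <|
      span_mono (image_mono (Iio_subset_Iio hik)) hfx) hi hx

theorem mem_span_image_Iio_succ_of_map_mem (hL : LinearIndepOn R L (Iio (K + 1)))
    (hf0 : f (L 0) = 0) (hf : ∀ i < K, f (L (i + 1)) = L i) {Γ : ℕ → M}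
    (hΓ0 : Γ 0 ∈ span R (L '' Iio 1)) (hΓ : ∀ i ≤ K, Γ i ∈ span R (L '' Iio (K + 1)))
    (hfΓ : ∀ i < K, f (Γ (i + 1)) ∈ span R (Γ '' Iio (i + 1))) :
    ∀ i ≤ K, Γ i ∈ span R (L '' Iio (i + 1)) := by
  intro i
  induction i using Nat.strong_induction_on with
  | _ i ih =>
    intro hi
    rcases i with _ | i
    · exact hΓ0
    have hprefix : span R (Γ '' Iio (i + 1)) ≤ span R (L '' Iio (i + 1)) := by
      rw [span_le]
      rintro _ ⟨j, hj, rfl⟩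
      rw [mem_Iio] at hj
      exact span_mono (image_mono (Iio_subset_Iio (by omega))) (ih j (by omega) (by omega))
    exact mem_span_image_Iio_of_map_mem_of_lt hL hf0 hf (by omega) (hΓ _ hi)
      (hprefix (hfΓ i (by omega)))

end Flag

section PureDerivatives

variable {σ : Type*} [DecidableEq σ]

theorem shiftOp_apply (j : σ) (c : (σ →₀ ℕ) →₀ ℂ) (β : σ →₀ ℕ) :
    shiftOp j c β = c (β + Finsupp.single j 1) :=
  Finsupp.comapDomain_apply _ _ _ _

noncomputable def shiftOpLinearMap (j : σ) : ((σ →₀ ℕ) →₀ ℂ) →ₗ[ℂ] ((σ →₀ ℕ) →₀ ℂ) where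
  toFun := shiftOp j
  map_add' x y := by ext β; simp only [shiftOp_apply, Finsupp.add_apply]
  map_smul' r x := by ext β; simp only [shiftOp_apply, Finsupp.smul_apply, RingHom.id_apply]

theorem shiftOp_single_zero (j : σ) (r : ℂ) : shiftOp j (Finsupp.single 0 r) = 0 := by
  ext β
  rw [shiftOp_apply, Finsupp.single_eq_of_ne]
  · rfl
  · intro h
    simpa using congrArg (· j) h

-- `L i (D(m eⱼ)) = L 0 (D((m - i) eⱼ))`, and `D(0)` has no component at `D(k eⱼ)` for `k > 0`.
theorem apply_single_eq_zero_of_shiftOp_eq {j : σ} {L : ℕ → ((σ →₀ ℕ) →₀ ℂ)} {K : ℕ}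
    (hL0 : L 0 = Finsupp.single 0 1) (hΦL : ∀ i < K, shiftOp j (L (i + 1)) = L i) :
    ∀ i ≤ K, ∀ m, i < m → L i (Finsupp.single j m) = 0 := by
  intro i
  induction i with
  | zero =>
    intro _ m hm
    rw [hL0, Finsupp.single_eq_of_ne]
    intro h
    simpa [eq_comm, hm.ne'] using congrArg (· j) h
  | succ i ih =>
    intro hi m hm
    obtain ⟨m, rfl⟩ : ∃ m', m = m' + 1 := ⟨m - 1, by omega⟩
    rw [← ih (by omega) m (by omega), ← hΦL i (by omega), shiftOp_apply, Finsupp.single_add]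

end PureDerivatives

theorem breadth_one_closed_basis_uniqueness_general {n : ℕ} (K : ℕ)
    (L Γ : ℕ → ((Fin (n + 1) →₀ ℕ) →₀ ℂ)) (a : ℂ)
    (hLindep : LinearIndependent ℂ (fun i : Fin (K + 1) => L i))
    (hspan : Submodule.span ℂ (Set.range fun i : Fin (K + 1) => L i) =
      Submodule.span ℂ (Set.range fun i : Fin (K + 1) => Γ i))
    (hL0 : L 0 = Finsupp.single 0 1) (hΓ0 : Γ 0 = L 0)
    (hLpure : ∀ i ≤ K, L i (Finsupp.single (0 : Fin (n + 1)) i) = 1)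
    (hΓpure : ∀ i ≤ K, Γ i (Finsupp.single (0 : Fin (n + 1)) i) = a⁻¹ ^ i)
    (hΦL : ∀ i < K, shiftOp (0 : Fin (n + 1)) (L (i + 1)) = L i)
    (hΦΓ : ∀ i < K, shiftOp (0 : Fin (n + 1)) (Γ (i + 1)) ∈
      Submodule.span ℂ (Set.range fun j : Fin (i + 1) => Γ j)) :
    ∀ i ≤ K, ∃ d : ℕ → ℂ,
      Γ i = a⁻¹ ^ i • L i + ∑ j ∈ Finset.range i, d j • L j := by
  simp only [range_fin_eq_image_Iio] at hspan hΦΓ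
  have hLindepOn : LinearIndepOn ℂ L (Iio (K + 1)) := by
    rwa [← Fin.range_val, linearIndepOn_range_iff Fin.val_injective]
  have htriangular := mem_span_image_Iio_succ_of_map_mem (f := shiftOpLinearMap 0) hLindepOn
    (by rw [hL0]; exact shiftOp_single_zero 0 1) hΦL
    (by rw [hΓ0]; exact subset_span ⟨0, by simp, rfl⟩)
    (fun i hi => hspan ▸ subset_span ⟨i, by simp; omega, rfl⟩) hΦΓ
  intro i hi
  have hΓi_mem := htriangular i hi
  rw [span_image_Iio_add_one, mem_span_insert] at hΓi_mem
  obtain ⟨c, y, hy, hΓi⟩ := hΓi_mem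
  have hy_pure : y (Finsupp.single 0 i) = 0 := by
    refine (span_le (p := LinearMap.ker (Finsupp.lapply (Finsupp.single 0 i)))).mpr ?_ hy
    rintro _ ⟨j, hj, rfl⟩
    exact apply_single_eq_zero_of_shiftOp_eq hL0 hΦL j (by simp at hj; omega) i hj
  have hc : c = a⁻¹ ^ i := by
    simpa [hΓpure i hi, hLpure i hi, hy_pure] using (congrArg (· (Finsupp.single 0 i)) hΓi).symm
  rw [← Finset.coe_range] at hy
  obtain ⟨d, rfl⟩ := (mem_span_image_finset_iff_exists_fun' ℂ).mp hy
  exact ⟨d, hc ▸ hΓi⟩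

/-- Uniqueness of the closed extension in breadth one: if two closed bases `{L̃₀,…,L̃_K}` and
`{Γ₀,…,Γ_K}` of the same Max Noether space satisfy `Γ₀ = L̃₀ = D(0)`, `Γ₁ = (1/a)L̃₁` for some
`a ≠ 0`, each `L̃ᵢ` (resp. `Γᵢ`) contains the pure derivative `D(i,0,…,0)` with coefficient `1`
(resp. `1/aⁱ`) and no lower pure derivatives `D(j,0,…,0)` for `0 < j < i`, `Φ₁` lowers the
`L̃` family by one, and the `Γ` family is closed under `Φ₁`, then each `Γᵢ` is a linear
combination of `L̃₀,…,L̃ᵢ`, with reduced form `Γ̄ᵢ = (1/aⁱ) L̃ᵢ`. -/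
theorem breadth_one_closed_basis_uniqueness {n : ℕ} (K : ℕ) (hK : 1 ≤ K)
    (L Γ : ℕ → ((Fin (n + 1) →₀ ℕ) →₀ ℂ)) (a : ℂ) (ha : a ≠ 0)
    (hLindep : LinearIndependent ℂ (fun i : Fin (K + 1) => L i))
    (hΓindep : LinearIndependent ℂ (fun i : Fin (K + 1) => Γ i))
    (hspan : Submodule.span ℂ (Set.range fun i : Fin (K + 1) => L i) =
      Submodule.span ℂ (Set.range fun i : Fin (K + 1) => Γ i))
    (hL0 : L 0 = Finsupp.single 0 1) (hΓ0 : Γ 0 = L 0)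
    (hΓ1 : Γ 1 = a⁻¹ • L 1)
    (hLpure : ∀ i ≤ K, L i (Finsupp.single (0 : Fin (n + 1)) i) = 1)
    (hΓpure : ∀ i ≤ K, Γ i (Finsupp.single (0 : Fin (n + 1)) i) = a⁻¹ ^ i)
    (hLlow : ∀ i ≤ K, ∀ j, 0 < j → j < i → L i (Finsupp.single (0 : Fin (n + 1)) j) = 0)
    (hΓlow : ∀ i ≤ K, ∀ j, 0 < j → j < i → Γ i (Finsupp.single (0 : Fin (n + 1)) j) = 0)
    (hΦL : ∀ i < K, shiftOp (0 : Fin (n + 1)) (L (i + 1)) = L i)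
    (hΦΓ : ∀ i < K, shiftOp (0 : Fin (n + 1)) (Γ (i + 1)) ∈
      Submodule.span ℂ (Set.range fun j : Fin (i + 1) => Γ j)) :
    ∀ i ≤ K, ∃ d : ℕ → ℂ,
      Γ i = a⁻¹ ^ i • L i + ∑ j ∈ Finset.range i, d j • L j :=
  breadth_one_closed_basis_uniqueness_general K L Γ a hLindep hspan hL0 hΓ0 hLpure hΓpure hΦL hΦΓ
end
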